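/- arXiv:1703.04274 — 2 statements merged into one kernel-verified Lean document; each statement's English description precedes it below -/
import Mathlib

section
/- Let E be a real Hilbert space, ψ : E → ℝ a differentiable 1-strongly convex function, and W ⊆ E a nonempty closed convex set. Let η > 0, G > 0, B ≥ 0, N ≥ 1, and let w* ∈ W. Suppose w₁, …, w_{N+1} ∈ W, g₁, …, g_N ∈ E, and v₁, …, v_N ∈ E satisfy: ‖g_j‖ ≤ G, ∇ψ(v_j) = ∇ψ(w_j) − η·g_j, and w_{j+1} is a Bregman projection of v_j onto W (Δψ(w_{j+1}, v_j) ≤ Δψ(x, v_j) for all x ∈ W), for every j = 1, …, N. If Δψ(w*, w₁) ≤ B², then Σ_{j=1}^N ⟪w_j − w*, g_j⟫ ≤ B²/η + N·η·G²/2. -/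
open RealInnerProductSpace InnerProductSpace

/-!
Write `D` for the Bregman divergence. The three-point identity
`D(x, y) + D(y, z) + ⟪∇ψ(y) - ∇ψ(z), x - y⟫ = D(x, z)` with `∇ψ(w) - ∇ψ(v) = η g` gives
`η ⟪w - w*, g⟫ = D(w*, w) - D(w*, v) + D(w, v)`. First-order optimality of the Bregman
projection `w'` of `v` gives `D(w*, w') + D(w', v) ≤ D(w*, v)`, and the three-point identity
once more, with strong convexity and Young's inequality, bounds `D(w, v) - D(w', v)` by
`η² ‖g‖² / 2`. So each step costs `D(w*, w) - D(w*, w') + η² G² / 2`, and the sum telescopes.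
-/

theorem IsMinOn.inner_sub_nonneg_of_hasGradientAt {E : Type*} [NormedAddCommGroup E]
    [InnerProductSpace ℝ E] [CompleteSpace E] {f : E → ℝ} {f' p x : E} {s : Set E}
    (hmin : IsMinOn f s p) (hf : HasGradientAt f f' p) (hs : Convex ℝ s) (hp : p ∈ s)
    (hx : x ∈ s) : 0 ≤ ⟪f', x - p⟫ := by
  simpa using hmin.localize.hasFDerivWithinAt_nonneg hf.hasFDerivAt.hasFDerivWithinAt
    (sub_mem_posTangentConeAt_of_segment_subset (hs.segment_subset hp hx))

theorem real_inner_le_half_norm_sq_add_half_norm_sq {E : Type*} [NormedAddCommGroup E]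
    [InnerProductSpace ℝ E] (a b : E) : ⟪a, b⟫ ≤ ‖a‖ ^ 2 / 2 + ‖b‖ ^ 2 / 2 := by
  nlinarith [norm_sub_sq_real a b, sq_nonneg ‖a - b‖]

theorem Finset.sum_range_le_sub_add_of_le {a d : ℕ → ℝ} {c : ℝ} {N : ℕ}
    (h : ∀ j < N, a j ≤ d j - d (j + 1) + c) :
    ∑ j ∈ Finset.range N, a j ≤ d 0 - d N + N * c := by
  calc ∑ j ∈ Finset.range N, a j ≤ ∑ j ∈ Finset.range N, (d j - d (j + 1) + c) :=
        Finset.sum_le_sum fun j hj => h j (Finset.mem_range.mp hj)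
    _ = d 0 - d N + N * c := by
        rw [Finset.sum_add_distrib, Finset.sum_range_sub', Finset.sum_const, Finset.card_range,
          nsmul_eq_mul]

section Bregman

variable {E : Type*} [NormedAddCommGroup E] [InnerProductSpace ℝ E]

def bregmanDiv (ψ : E → ℝ) (ψ' : E → E) (x y : E) : ℝ := ψ x - ψ y - ⟪ψ' y, x - y⟫

variable {ψ : E → ℝ} {ψ' : E → E}

theorem bregmanDiv_add_bregmanDiv_add_inner (x y z : E) :
    bregmanDiv ψ ψ' x y + bregmanDiv ψ ψ' y z + ⟪ψ' y - ψ' z, x - y⟫ = bregmanDiv ψ ψ' x z := by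
  have hsplit : x - z = (x - y) + (y - z) := by abel
  simp only [bregmanDiv, hsplit, inner_add_right, inner_sub_left]
  ring

theorem half_norm_sub_sq_le_bregmanDiv
    (hsc : ∀ x y : E, ψ x + ⟪ψ' x, y - x⟫ + ‖y - x‖ ^ 2 / 2 ≤ ψ y) (x y : E) :
    ‖x - y‖ ^ 2 / 2 ≤ bregmanDiv ψ ψ' x y := by
  have := hsc y x
  rw [bregmanDiv]
  linarith

theorem hasGradientAt_bregmanDiv_left [CompleteSpace E] {x : E} (hψ : HasGradientAt ψ (ψ' x) x)
    (y : E) : HasGradientAt (bregmanDiv ψ ψ' · y) (ψ' x - ψ' y) x := by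
  have hD : (bregmanDiv ψ ψ' · y) = fun z => ψ z - ψ y - (toDual ℝ E (ψ' y) z - ⟪ψ' y, y⟫) := by
    ext z
    simp [bregmanDiv, inner_sub_right]
  rw [hasGradientAt_iff_hasFDerivAt, map_sub, hD]
  exact (hψ.hasFDerivAt.sub_const (ψ y)).sub ((toDual ℝ E (ψ' y)).hasFDerivAt.sub_const _)

/-- Generalized Pythagorean inequality for a Bregman projection `p` of `v` onto `W`. -/
theorem bregmanDiv_add_bregmanDiv_le_of_isMinOn [CompleteSpace E] {W : Set E} {p v u : E}
    (hψ : HasGradientAt ψ (ψ' p) p) (hW : Convex ℝ W) (hp : p ∈ W)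
    (hmin : IsMinOn (bregmanDiv ψ ψ' · v) W p) (hu : u ∈ W) :
    bregmanDiv ψ ψ' u p + bregmanDiv ψ ψ' p v ≤ bregmanDiv ψ ψ' u v := by
  have hvi := hmin.inner_sub_nonneg_of_hasGradientAt (hasGradientAt_bregmanDiv_left hψ v) hW hp hu
  linarith [bregmanDiv_add_bregmanDiv_add_inner (ψ := ψ) (ψ' := ψ') u p v]

theorem mirror_descent_step [CompleteSpace E] {W : Set E} {η : ℝ} {w g v w' u : E}
    (hψ : HasGradientAt ψ (ψ' w') w')
    (hsc : ∀ x y : E, ψ x + ⟪ψ' x, y - x⟫ + ‖y - x‖ ^ 2 / 2 ≤ ψ y) (hW : Convex ℝ W)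
    (hupd : ψ' v = ψ' w - η • g) (hw' : w' ∈ W) (hproj : IsMinOn (bregmanDiv ψ ψ' · v) W w')
    (hu : u ∈ W) :
    η * ⟪w - u, g⟫ ≤ bregmanDiv ψ ψ' u w - bregmanDiv ψ ψ' u w' + η ^ 2 * ‖g‖ ^ 2 / 2 := by
  have hgrad : ψ' w - ψ' v = η • g := by rw [hupd, sub_sub_cancel]
  have hstart := bregmanDiv_add_bregmanDiv_add_inner (ψ := ψ) (ψ' := ψ') u w v
  have hend := bregmanDiv_add_bregmanDiv_add_inner (ψ := ψ) (ψ' := ψ') w' w v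
  have hpyth := bregmanDiv_add_bregmanDiv_le_of_isMinOn hψ hW hw' hproj hu
  have hstrong := half_norm_sub_sq_le_bregmanDiv hsc w' w
  have hyoung := real_inner_le_half_norm_sq_add_half_norm_sq (η • g) (w - w')
  rw [hgrad, real_inner_smul_left] at hstart hend
  rw [real_inner_smul_left, norm_smul, mul_pow, Real.norm_eq_abs, sq_abs, norm_sub_rev]
    at hyoung
  have hsw : ⟪g, u - w⟫ = -⟪w - u, g⟫ := by rw [real_inner_comm, ← inner_neg_left, neg_sub]
  have hww : ⟪g, w' - w⟫ = -⟪g, w - w'⟫ := by rw [← inner_neg_right, neg_sub]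
  rw [hsw] at hstart
  rw [hww] at hend
  linarith

end Bregman

theorem mirror_descent_telescoped_regret_general
    {E : Type*} [NormedAddCommGroup E] [InnerProductSpace ℝ E] [CompleteSpace E]
    (ψ : E → ℝ) (ψ' : E → E) (hψ : ∀ x, HasGradientAt ψ (ψ' x) x)
    (hsc : ∀ x y : E, ψ x + ⟪ψ' x, y - x⟫ + ‖y - x‖ ^ 2 / 2 ≤ ψ y)
    (W : Set E) (hWconv : Convex ℝ W)
    (Dψ : E → E → ℝ) (hD : ∀ x y, Dψ x y = ψ x - ψ y - ⟪ψ' y, x - y⟫)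
    (η G B : ℝ) (hη : 0 < η)
    (N : ℕ)
    (wstar : E) (hwstar : wstar ∈ W)
    (w : ℕ → E) (g : ℕ → E) (v : ℕ → E)
    (hwW : ∀ j ≤ N, w j ∈ W)
    (hg : ∀ j < N, ‖g j‖ ≤ G)
    (hupd : ∀ j < N, ψ' (v j) = ψ' (w j) - η • g j)
    (hproj : ∀ j < N, ∀ x ∈ W, Dψ (w (j + 1)) (v j) ≤ Dψ x (v j))
    (hinit : Dψ wstar (w 0) ≤ B ^ 2) :
    ∑ j ∈ Finset.range N, ⟪w j - wstar, g j⟫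
      ≤ B ^ 2 / η + N * η * G ^ 2 / 2 := by
  obtain rfl : Dψ = bregmanDiv ψ ψ' := funext₂ hD
  have hstep : ∀ j < N, η * ⟪w j - wstar, g j⟫ ≤ bregmanDiv ψ ψ' wstar (w j)
      - bregmanDiv ψ ψ' wstar (w (j + 1)) + η ^ 2 * G ^ 2 / 2 := fun j hj => by
    refine (mirror_descent_step (hψ _) hsc hWconv (hupd j hj) (hwW (j + 1) hj)
      (fun x hx => hproj j hj x hx) hwstar).trans ?_
    gcongr
    exact hg j hj
  have hsum := Finset.sum_range_le_sub_add_of_le hstep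
  have hlast : 0 ≤ bregmanDiv ψ ψ' wstar (w N) :=
    (half_norm_sub_sq_le_bregmanDiv hsc _ _).trans' (by positivity)
  rw [← Finset.mul_sum] at hsum
  rw [div_add' _ _ _ hη.ne', le_div_iff₀' hη]
  linarith

/-- **Telescoped regret bound for `N` steps of online mirror descent.**
Iterates are indexed `w 0, …, w N` (so `w 0, …, w N` are the `N+1` points
`w₁, …, w_{N+1}` of the statement), with `w (j+1)` a Bregman projection onto `W`
of `v j` where `∇ψ(v j) = ∇ψ(w j) - η·(g j)` and `‖g j‖ ≤ G`. If
`Δψ(w*, w 0) ≤ B²` then `Σ_{j<N} ⟪w j - w*, g j⟫ ≤ B²/η + N·η·G²/2`. -/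
theorem mirror_descent_telescoped_regret
    {E : Type*} [NormedAddCommGroup E] [InnerProductSpace ℝ E] [CompleteSpace E]
    (ψ : E → ℝ) (ψ' : E → E) (hψ : ∀ x, HasGradientAt ψ (ψ' x) x)
    (hsc : ∀ x y : E, ψ x + ⟪ψ' x, y - x⟫ + ‖y - x‖ ^ 2 / 2 ≤ ψ y)
    (W : Set E) (hWne : W.Nonempty) (hWcl : IsClosed W) (hWconv : Convex ℝ W)
    (Dψ : E → E → ℝ) (hD : ∀ x y, Dψ x y = ψ x - ψ y - ⟪ψ' y, x - y⟫)
    (η G B : ℝ) (hη : 0 < η) (hG : 0 < G) (hB : 0 ≤ B)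
    (N : ℕ) (hN : 1 ≤ N)
    (wstar : E) (hwstar : wstar ∈ W)
    (w : ℕ → E) (g : ℕ → E) (v : ℕ → E)
    (hwW : ∀ j ≤ N, w j ∈ W)
    (hg : ∀ j < N, ‖g j‖ ≤ G)
    (hupd : ∀ j < N, ψ' (v j) = ψ' (w j) - η • g j)
    (hproj : ∀ j < N, ∀ x ∈ W, Dψ (w (j + 1)) (v j) ≤ Dψ x (v j))
    (hinit : Dψ wstar (w 0) ≤ B ^ 2) :
    ∑ j ∈ Finset.range N, ⟪w j - wstar, g j⟫
      ≤ B ^ 2 / η + N * η * G ^ 2 / 2 :=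
  mirror_descent_telescoped_regret_general ψ ψ' hψ hsc W hWconv Dψ hD η G B hη N wstar hwstar w g v
    hwW hg hupd hproj hinit
end

section
/- Let n ≥ 1 and τ ≥ 1 be integers and set T = n·τ. For each i ∈ {1, …, n} and j ∈ {1, …, τ}, let w_{i,j} : {−1,+1}ⁿ → [−1, 1] be a function such that w_{i,j}(ε) = w_{i,j}(ε′) whenever ε_k = ε′_k for all k < i (i.e. w_{i,j} depends only on the coordinates ε₁, …, ε_{i−1}). Then 2^{−n} · Σ_{ε ∈ {−1,+1}ⁿ} ( Σ_{i=1}^n Σ_{j=1}^τ ε_i · w_{i,j}(ε) + τ·|Σ_{i=1}^n ε_i| ) ≥ τ·√n/√2 = √(τ·T)/√2. -/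
/-!
The cross terms vanish: `w i j` does not see `ε i`, and flipping the sign of `ε i` is an
involution of the sign vectors that negates `ε i * w i j ε`. What remains is
`τ · 2⁻ⁿ ∑_ε |ε₁ + ⋯ + εₙ|`. Counting sign vectors by their numbers `a`, `b` of `+1`s and `-1`s,
`∑_ε |ε₁ + ⋯ + εₙ| = B n := ∑_{a+b=n} C(n,a) |a - b|`, and Pascal's rule gives
`B (n+1) = 2 B n + 2 C(n, n/2) [n even]`. Hence `B (2m) = 2m C(2m,m)` and `B (2m+2) = 2 B (2m+1)`,
and `4ᵐ ≤ 2 √m C(2m,m)` yields `2⁻ⁿ B n ≥ √(n/2)`.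
-/

open Finset Function

theorem sum_piFinset_apply_mul_eq_zero {ι R : Type*} [Fintype ι] [DecidableEq ι] [Ring R]
    [IsAddTorsionFree R] {s : Finset R} (hs : ∀ a ∈ s, -a ∈ s) (i : ι) {F : (ι → R) → R}
    (hF : ∀ ε, F (update ε i (-ε i)) = F ε) :
    ∑ ε ∈ Fintype.piFinset fun _ => s, ε i * F ε = 0 := by
  set flipSign : (ι → R) → ι → R := fun ε => update ε i (-ε i)
  have flipSign_flipSign : ∀ ε, flipSign (flipSign ε) = ε := fun ε => by simp [flipSign]
  have flipSign_mem :
      ∀ ε ∈ Fintype.piFinset fun _ => s, flipSign ε ∈ Fintype.piFinset fun _ => s := by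
    intro ε hε
    simp only [Fintype.mem_piFinset] at hε ⊢
    intro k
    by_cases hk : k = i
    · subst hk; simpa [flipSign] using hs _ (hε k)
    · simpa [flipSign, hk] using hε k
  refine self_eq_neg.mp ?_
  calc ∑ ε ∈ Fintype.piFinset fun _ => s, ε i * F ε
      = ∑ ε ∈ Fintype.piFinset fun _ => s, flipSign ε i * F (flipSign ε) :=
        (sum_nbij' flipSign flipSign flipSign_mem flipSign_mem (fun ε _ => flipSign_flipSign ε)
          (fun ε _ => flipSign_flipSign ε) fun _ _ => rfl).symm
    _ = -∑ ε ∈ Fintype.piFinset fun _ => s, ε i * F ε := by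
        simp [flipSign, hF, ← sum_neg_distrib]

noncomputable abbrev signVectors (n : ℕ) : Finset (Fin n → ℝ) := Fintype.piFinset fun _ => {-1, 1}

theorem sum_signVectors_comp_sum {M : Type*} [AddCommMonoid M] (n : ℕ) (f : ℝ → M) :
    ∑ ε ∈ signVectors n, f (∑ i, ε i) =
      ∑ ij ∈ antidiagonal n, n.choose ij.1 • f (ij.1 - ij.2) := by
  classical
  let toSigns : Finset (Fin n) → Fin n → ℝ := fun A i => if i ∈ A then 1 else -1
  have sum_toSigns : ∀ A, ∑ i, toSigns A i = #A - (n - #A : ℕ) := by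
    intro A
    simp [toSigns, sum_ite, filter_not, card_univ_sdiff, sub_eq_add_neg]
  calc ∑ ε ∈ signVectors n, f (∑ i, ε i)
      = ∑ A ∈ univ.powerset, f (∑ i, toSigns A i) := by
        refine (sum_nbij' toSigns (fun ε => ({i | ε i = 1} : Finset (Fin n))) ?_ (by simp) ?_ ?_
          fun _ _ => rfl).symm
        · intro A _
          simp only [Fintype.mem_piFinset]
          intro i
          by_cases h : i ∈ A <;> norm_num [toSigns, h]
        · intro A _
          ext i
          by_cases h : i ∈ A <;> norm_num [toSigns, h]
        · intro ε hε
          ext i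
          have := Fintype.mem_piFinset.mp hε i
          simp only [mem_insert, mem_singleton] at this
          rcases this with h | h <;> norm_num [toSigns, h]
    _ = ∑ k ∈ range (n + 1), n.choose k • f (k - (n - k : ℕ)) := by
        simp_rw [sum_toSigns]
        rw [sum_powerset_apply_card (fun k => f (k - (n - k : ℕ))), card_univ, Fintype.card_fin]
    _ = _ :=
        (Nat.sum_antidiagonal_eq_sum_range_succ_mk (fun ij => n.choose ij.1 • f (ij.1 - ij.2)) n).symm

def binomAbsDev (n : ℕ) : ℤ := ∑ ij ∈ antidiagonal n, (n.choose ij.1 : ℤ) * |(ij.1 : ℤ) - ij.2|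

theorem abs_sub_one_add_abs_add_one (x : ℤ) :
    |x - 1| + |x + 1| = 2 * |x| + if x = 0 then 2 else 0 := by
  split_ifs with hx
  · simp [hx]
  · rcases lt_or_gt_of_ne hx with h | h
    · rw [abs_of_neg h, abs_of_neg (show x - 1 < 0 by omega),
        abs_of_nonpos (show x + 1 ≤ 0 by omega)]
      ring
    · rw [abs_of_pos h, abs_of_nonneg (show 0 ≤ x - 1 by omega),
        abs_of_pos (show 0 < x + 1 by omega)]
      ring

theorem binomAbsDev_succ (n : ℕ) :
    binomAbsDev (n + 1) = 2 * binomAbsDev n +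
      2 * ∑ ij ∈ antidiagonal n, if ij.1 = ij.2 then (n.choose ij.1 : ℤ) else 0 := by
  rw [binomAbsDev, sum_antidiagonal_choose_succ_mul (fun a b => |(a : ℤ) - b|), binomAbsDev,
    mul_sum, mul_sum, ← sum_add_distrib, ← sum_add_distrib]
  refine sum_congr rfl fun ij hij => ?_
  have h := abs_sub_one_add_abs_add_one ((ij.1 : ℤ) - ij.2)
  simp only [sub_eq_zero, Nat.cast_inj] at h
  rw [← Nat.choose_symm_of_eq_add (mem_antidiagonal.mp hij).symm, ← mul_add]
  push_cast
  rw [sub_add_eq_sub_sub, add_sub_right_comm, h]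
  split_ifs <;> ring

theorem binomAbsDev_two_mul_add_two (m : ℕ) :
    binomAbsDev (2 * m + 2) = 2 * binomAbsDev (2 * m + 1) := by
  rw [binomAbsDev_succ, add_eq_left, mul_eq_zero_iff_left two_ne_zero]
  refine sum_eq_zero fun ij hij => if_neg fun h => ?_
  have := mem_antidiagonal.mp hij
  omega

theorem binomAbsDev_two_mul (m : ℕ) : binomAbsDev (2 * m) = 2 * m * m.centralBinom := by
  induction m with
  | zero => simp [binomAbsDev]
  | succ m ih =>
    have diagonal : ∑ ij ∈ antidiagonal (2 * m),
        (if ij.1 = ij.2 then ((2 * m).choose ij.1 : ℤ) else 0) = m.centralBinom := by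
      rw [sum_eq_single (m, m)]
      · simp [Nat.centralBinom]
      · rintro ⟨a, b⟩ hab hne
        have := mem_antidiagonal.mp hab
        exact if_neg fun h => hne (by simp only at h; ext <;> simp only <;> omega)
      · simp [two_mul]
    have step : ((m : ℤ) + 1) * (m + 1).centralBinom = 2 * (2 * m + 1) * m.centralBinom := by
      exact_mod_cast Nat.succ_mul_centralBinom_succ m
    rw [mul_add_one, binomAbsDev_two_mul_add_two, binomAbsDev_succ, ih, diagonal]
    push_cast
    linear_combination (-2) * step

theorem Nat.sixteen_pow_le_four_mul_mul_centralBinom_sq {m : ℕ} (hm : 0 < m) :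
    16 ^ m ≤ 4 * m * m.centralBinom ^ 2 := by
  induction m, hm using Nat.le_induction with
  | base => simp [Nat.centralBinom, Nat.choose]
  | succ m _ ih =>
    refine Nat.le_of_mul_le_mul_left ?_ m.succ_pos
    have : 4 * m * (m + 1) ≤ (2 * m + 1) ^ 2 := by nlinarith
    calc (m + 1) * 16 ^ (m + 1) = 16 * (m + 1) * 16 ^ m := by ring
      _ ≤ 16 * (m + 1) * (4 * m * m.centralBinom ^ 2) := by gcongr
      _ = 16 * (4 * m * (m + 1)) * m.centralBinom ^ 2 := by ring
      _ ≤ 16 * (2 * m + 1) ^ 2 * m.centralBinom ^ 2 := by gcongr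
      _ = 4 * ((m + 1) * (m + 1).centralBinom) ^ 2 := by
        rw [Nat.succ_mul_centralBinom_succ]; ring
      _ = (m + 1) * (4 * (m + 1) * (m + 1).centralBinom ^ 2) := by ring

theorem mul_four_pow_le_two_mul_binomAbsDev_sq (n : ℕ) :
    (n : ℤ) * 4 ^ n ≤ 2 * binomAbsDev n ^ 2 := by
  obtain ⟨m, rfl | rfl⟩ := n.even_or_odd'
  · rw [binomAbsDev_two_mul]
    rcases m.eq_zero_or_pos with rfl | hm
    · simp
    have : (16 : ℤ) ^ m ≤ 4 * m * m.centralBinom ^ 2 := by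
      exact_mod_cast Nat.sixteen_pow_le_four_mul_mul_centralBinom_sq hm
    rw [pow_mul]
    push_cast
    nlinarith
  · have hodd : binomAbsDev (2 * m + 1) = (m + 1) * (m + 1).centralBinom := by
      have := binomAbsDev_two_mul_add_two m
      rw [show 2 * m + 2 = 2 * (m + 1) by ring, binomAbsDev_two_mul] at this
      push_cast at this
      linarith
    have : (16 : ℤ) ^ (m + 1) ≤ 4 * (m + 1) * (m + 1).centralBinom ^ 2 := by
      exact_mod_cast Nat.sixteen_pow_le_four_mul_mul_centralBinom_sq m.succ_pos
    rw [hodd, pow_succ, pow_mul]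
    rw [pow_succ] at this
    push_cast
    nlinarith

theorem sqrt_div_sqrt_two_le_mean_abs_sum (n : ℕ) :
    √n / √2 ≤ (2 ^ n)⁻¹ * ∑ ε ∈ signVectors n, |∑ i, ε i| := by
  have hsum : ∑ ε ∈ signVectors n, |∑ i, ε i| = binomAbsDev n := by
    simp [sum_signVectors_comp_sum, binomAbsDev, nsmul_eq_mul]
  have key : (n : ℝ) * (2 ^ n) ^ 2 ≤ 2 * (binomAbsDev n : ℝ) ^ 2 := by
    rw [← pow_mul, mul_comm n, pow_mul]
    exact_mod_cast mul_four_pow_le_two_mul_binomAbsDev_sq n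
  rw [← Real.sqrt_div n.cast_nonneg, Real.sqrt_le_left (by positivity), hsum, mul_pow, inv_pow,
    ← div_eq_inv_mul, le_div_iff₀ (by positivity)]
  linarith

theorem delayed_feedback_regret_lower_bound_general
    (n τ : ℕ)
    (w : Fin n → Fin τ → (Fin n → ℝ) → ℝ)
    (hmeas : ∀ (i : Fin n) (j : Fin τ) (ε ε' : Fin n → ℝ),
      (∀ k : Fin n, k < i → ε k = ε' k) → w i j ε = w i j ε') :
    (τ : ℝ) * Real.sqrt n / Real.sqrt 2 ≤
      ((2 : ℝ) ^ n)⁻¹ *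
        ∑ ε ∈ Fintype.piFinset (fun _ : Fin n => ({-1, 1} : Finset ℝ)),
          ((∑ i : Fin n, ∑ j : Fin τ, ε i * w i j ε) + (τ : ℝ) * |∑ i : Fin n, ε i|) := by
  have unpredictable : ∀ i j, ∑ ε ∈ signVectors n, ε i * w i j ε = 0 := fun i j =>
    sum_piFinset_apply_mul_eq_zero (by simp) i fun ε =>
      hmeas i j _ _ fun k hk => update_of_ne hk.ne _ _
  have no_cross : ∑ ε ∈ signVectors n, ∑ i, ∑ j, ε i * w i j ε = 0 := by
    rw [sum_comm]
    refine sum_eq_zero fun i _ => ?_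
    rw [sum_comm]
    exact sum_eq_zero fun j _ => unpredictable i j
  rw [sum_add_distrib, no_cross, zero_add, ← mul_sum, mul_div_assoc, mul_left_comm]
  gcongr
  exact sqrt_div_sqrt_two_le_mean_abs_sum n

/-- **`Ω(√(τT))` regret lower bound for delayed online learning (no permutations).**
With `T = n·τ` rounds in `n` blocks of size `τ`, losses `f_t(w) = ε_i·w` with a
common uniformly random sign `ε_i ∈ {-1,+1}` per block, and predictions
`w i j ε ∈ [-1,1]` depending only on signs of strictly earlier blocks, the expected
regret satisfies
`2⁻ⁿ · Σ_ε ( Σ_i Σ_j ε_i · w i j ε + τ·|Σ_i ε_i| ) ≥ τ·√n/√2 = √(τT)/√2`. -/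
theorem delayed_feedback_regret_lower_bound
    (n τ : ℕ) (hn : 1 ≤ n) (hτ : 1 ≤ τ)
    (T : ℕ) (hT : T = n * τ)
    (w : Fin n → Fin τ → (Fin n → ℝ) → ℝ)
    (hrange : ∀ i j ε, w i j ε ∈ Set.Icc (-1 : ℝ) 1)
    (hmeas : ∀ (i : Fin n) (j : Fin τ) (ε ε' : Fin n → ℝ),
      (∀ k : Fin n, k < i → ε k = ε' k) → w i j ε = w i j ε') :
    (τ : ℝ) * Real.sqrt n / Real.sqrt 2 ≤
      ((2 : ℝ) ^ n)⁻¹ *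
        ∑ ε ∈ Fintype.piFinset (fun _ : Fin n => ({-1, 1} : Finset ℝ)),
          ((∑ i : Fin n, ∑ j : Fin τ, ε i * w i j ε) + (τ : ℝ) * |∑ i : Fin n, ε i|) :=
  delayed_feedback_regret_lower_bound_general n τ w hmeas
end
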